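/- Perturbation semantics of the backward value: in a smooth, decomposable PC with strictly positive forward values, for any node n with backward value bk(n) (defined as in the backward pass with bk(root)=1), if the forward value of n is replaced by fw'(n) while all other inputs are unchanged, the root's recomputed value equals (1 − bk(n))·fw(root) + bk(n)·fw(root)·fw'(n)/fw(n). Equivalently, the root value is an affine function of fw'(n) with slope bk(n)·fw(root)/fw(n). -/

import Mathlib

/-!
Write `e := edgeDeriv fw`, so that `e m c` is the partial derivative of `fw m` in the value of its
child `c`, and `pathWeight e a b` for the sum, over all paths from `b` down to `a`, of the products
of `e` along the path. Decomposability puts the perturbed node `n₀` below at most one child of each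
product node, so the recomputed forward pass is exactly affine in the perturbation:
`fw' b = fw b + pathWeight e n₀ b * (t - fw n₀)`. Splitting the paths at their last edge instead of
their first gives a top-down recursion for `pathWeight e · root`; under alternation it is the
recursion of the backward pass, rescaled: `pathWeight e a root = bk a * fw root / fw a`.
-/

open scoped Classical
open Finset

/-- Kinds of nodes of a probabilistic circuit DAG. -/
inductive NodeKind (d C : ℕ) : Type where
  | input (i : Fin d) (f : Fin C → ℝ)
  | sum
  | prod

/-- A probabilistic circuit represented as a DAG: nodes are `Fin n`, `edge p c` means `c` is
a child of `p`, `θ` are sum-edge parameters, edges go from larger to smaller indices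
(acyclicity), and `root` is a designated root node. -/
structure PCDag (d C : ℕ) where
  n : ℕ
  kind : Fin n → NodeKind d C
  edge : Fin n → Fin n → Prop
  θ : Fin n → Fin n → ℝ
  topo : ∀ p c, edge p c → (c : ℕ) < (p : ℕ)
  root : Fin n

namespace PCDag

variable {d C : ℕ}

noncomputable def children (G : PCDag d C) (v : Fin G.n) : Finset (Fin G.n) :=
  Finset.univ.filter fun c => G.edge v c

noncomputable def parents (G : PCDag d C) (v : Fin G.n) : Finset (Fin G.n) :=
  Finset.univ.filter fun p => G.edge p v

def IsSum (G : PCDag d C) (v : Fin G.n) : Prop := G.kind v = NodeKind.sum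
def IsProd (G : PCDag d C) (v : Fin G.n) : Prop := G.kind v = NodeKind.prod
def IsInputOn (G : PCDag d C) (v : Fin G.n) (i : Fin d) : Prop :=
  ∃ f, G.kind v = NodeKind.input i f
def IsInput (G : PCDag d C) (v : Fin G.n) : Prop := ∃ i, G.IsInputOn v i

/-- The pmf attached to an input node (junk value `0` on non-input nodes). -/
noncomputable def inputF (G : PCDag d C) (v : Fin G.n) : Fin C → ℝ :=
  match G.kind v with
  | NodeKind.input _ f => f
  | _ => 0

/-- `scope` is the scope function of the DAG: variables of descendant input nodes. -/
def ScopeFun (G : PCDag d C) (scope : Fin G.n → Finset (Fin d)) : Prop :=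
  ∀ v, scope v =
    match G.kind v with
    | NodeKind.input i _ => {i}
    | _ => (G.children v).biUnion scope

/-- `fw` is the soft-evidence forward pass with weight functions `w`: an input node on `X i`
outputs `Σ_x f x * w i x`, product nodes multiply their children's values, and sum nodes
take the `θ`-weighted sums of their children's values. -/
def FwFun (G : PCDag d C) (w : Fin d → Fin C → ℝ) (fw : Fin G.n → ℝ) : Prop :=
  ∀ v, fw v =
    match G.kind v with
    | NodeKind.input i f => ∑ x, f x * w i x
    | NodeKind.prod => ∏ c ∈ G.children v, fw c
    | NodeKind.sum => ∑ c ∈ G.children v, G.θ v c * fw c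

/-- `bk` is the backward pass: `bk root = 1`, for product nodes
`bk v = Σ_{m ∈ parents v} (θ m v · fw v / fw m) · bk m`, and for sum and input nodes
`bk v = Σ_{m ∈ parents v} bk m`. -/
def BkFun (G : PCDag d C) (fw bk : Fin G.n → ℝ) : Prop :=
  ∀ v, bk v =
    if v = G.root then 1
    else
      match G.kind v with
      | NodeKind.prod => ∑ m ∈ G.parents v, (G.θ m v * fw v / fw m) * bk m
      | _ => ∑ m ∈ G.parents v, bk m

/-- `sem` is the distribution semantics of the DAG (as functions of full assignments). -/
def SemFun (G : PCDag d C) (sem : Fin G.n → (Fin d → Fin C) → ℝ) : Prop :=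
  ∀ v x, sem v x =
    match G.kind v with
    | NodeKind.input i f => f (x i)
    | NodeKind.prod => ∏ c ∈ G.children v, sem c x
    | NodeKind.sum => ∑ c ∈ G.children v, G.θ v c * sem c x

/-- Smoothness: children of every sum node have the same scope. -/
def Smooth (G : PCDag d C) (scope : Fin G.n → Finset (Fin d)) : Prop :=
  ∀ v, G.IsSum v → ∀ c₁ ∈ G.children v, ∀ c₂ ∈ G.children v, scope c₁ = scope c₂

/-- Decomposability: children of every product node have pairwise disjoint scopes. -/
def Decomposable (G : PCDag d C) (scope : Fin G.n → Finset (Fin d)) : Prop :=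
  ∀ v, G.IsProd v → ∀ c₁ ∈ G.children v, ∀ c₂ ∈ G.children v,
    c₁ ≠ c₂ → Disjoint (scope c₁) (scope c₂)

/-- The PC alternates sum and product layers and all parents of input nodes are products. -/
def Alternating (G : PCDag d C) : Prop :=
  ∀ p c, G.edge p c →
    (G.IsSum p → G.IsProd c) ∧ (G.IsProd p → G.IsSum c ∨ G.IsInput c) ∧ ¬ G.IsInput p

/-- Sum-node edge weights are nonnegative and sum to 1 over the children. -/
def ValidSumWeights (G : PCDag d C) : Prop :=
  ∀ v, G.IsSum v → (∀ c ∈ G.children v, 0 ≤ G.θ v c) ∧ ∑ c ∈ G.children v, G.θ v c = 1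

/-- Every sum/product node has at least one child. -/
def InternalNonempty (G : PCDag d C) : Prop :=
  ∀ v, ¬ G.IsInput v → (G.children v).Nonempty

end PCDag

namespace PCDag

/-- `fw'` recomputes the forward pass with the forward value of node `n₀` replaced by `t`
while all other inputs are unchanged. -/
def FwReplaceFun {d C : ℕ} (G : PCDag d C) (w : Fin d → Fin C → ℝ)
    (n₀ : Fin G.n) (t : ℝ) (fw' : Fin G.n → ℝ) : Prop :=
  ∀ v, fw' v =
    if v = n₀ then t
    else
      match G.kind v with
      | NodeKind.input i f => ∑ x, f x * w i x
      | NodeKind.prod => ∏ c ∈ G.children v, fw' c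
      | NodeKind.sum => ∑ c ∈ G.children v, G.θ v c * fw' c

end PCDag

namespace Finset

theorem prod_add_eq_add_sum_of_ne_zero_unique {ι R : Type*} [CommRing R] [DecidableEq ι]
    (s : Finset ι) (y x : ι → R) (hx : ∀ i ∈ s, ∀ j ∈ s, x i ≠ 0 → x j ≠ 0 → i = j) :
    ∏ i ∈ s, (y i + x i) = ∏ i ∈ s, y i + ∑ i ∈ s, x i * ∏ j ∈ s.erase i, y j := by
  by_cases hex : ∃ i₀ ∈ s, x i₀ ≠ 0
  · obtain ⟨i₀, hi₀, hxi₀⟩ := hex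
    have hzero : ∀ i ∈ s, i ≠ i₀ → x i = 0 := fun i hi hne =>
      by_contra fun hxi => hne (hx i hi i₀ hi₀ hxi hxi₀)
    have hprod : ∏ j ∈ s.erase i₀, (y j + x j) = ∏ j ∈ s.erase i₀, y j :=
      prod_congr rfl fun j hj => by
        rw [hzero j (mem_of_mem_erase hj) (ne_of_mem_erase hj), add_zero]
    have hsum : ∑ i ∈ s, x i * ∏ j ∈ s.erase i, y j = x i₀ * ∏ j ∈ s.erase i₀, y j :=
      sum_eq_single_of_mem i₀ hi₀ fun i hi hne => by rw [hzero i hi hne, zero_mul]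
    rw [← mul_prod_erase s _ hi₀, hprod, ← mul_prod_erase s y hi₀, hsum]
    ring
  · push Not at hex
    rw [sum_eq_zero fun i hi => by rw [hex i hi, zero_mul], add_zero]
    exact prod_congr rfl fun i hi => by rw [hex i hi, add_zero]

end Finset

namespace PCDag

variable {d C : ℕ} {G : PCDag d C}

@[simp]
theorem mem_children {v c : Fin G.n} : c ∈ G.children v ↔ G.edge v c := by
  simp [children]

@[simp]
theorem mem_parents {v p : Fin G.n} : p ∈ G.parents v ↔ G.edge p v := by
  simp [parents]

theorem lt_of_mem_children {v c : Fin G.n} (hc : c ∈ G.children v) : (c : ℕ) < v :=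
  G.topo v c (mem_children.mp hc)

section PathWeight

variable (G) (e : Fin G.n → Fin G.n → ℝ)

noncomputable def pathWeight (a : Fin G.n) : Fin G.n → ℝ
  | b => (if b = a then 1 else 0) + ∑ c ∈ (G.children b).attach, e b c * pathWeight a c
  termination_by b => (b : ℕ)
  decreasing_by exact lt_of_mem_children c.2

variable {G}

theorem pathWeight_eq (a b : Fin G.n) :
    G.pathWeight e a b =
      (if b = a then 1 else 0) + ∑ c ∈ G.children b, e b c * G.pathWeight e a c := by
  rw [pathWeight, sum_attach (G.children b) fun c => e b c * G.pathWeight e a c]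

theorem pathWeight_eq_zero_of_lt {a b : Fin G.n} (hb : (b : ℕ) < a) :
    G.pathWeight e a b = 0 := by
  rw [pathWeight_eq, if_neg (fun h => (h ▸ hb).false), zero_add]
  exact sum_eq_zero fun c hc => by
    rw [pathWeight_eq_zero_of_lt ((lt_of_mem_children hc).trans hb), mul_zero]
  termination_by (b : ℕ)
  decreasing_by exact lt_of_mem_children hc

@[simp]
theorem pathWeight_self (a : Fin G.n) : G.pathWeight e a a = 1 := by
  rw [pathWeight_eq, if_pos rfl, add_eq_left]
  exact sum_eq_zero fun c hc => by
    rw [pathWeight_eq_zero_of_lt e (lt_of_mem_children hc), mul_zero]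

theorem pathWeight_eq_add_sum_parents (a b : Fin G.n) :
    G.pathWeight e a b =
      (if b = a then 1 else 0) + ∑ m ∈ G.parents a, e m a * G.pathWeight e m b := by
  have ih : ∀ c ∈ G.children b, G.pathWeight e a c =
      (if c = a then 1 else 0) + ∑ m ∈ G.parents a, e m a * G.pathWeight e m c :=
    fun c hc => pathWeight_eq_add_sum_parents a c
  have hfirst : ∑ c ∈ G.children b, e b c * G.pathWeight e a c =
      (if G.edge b a then e b a else 0) +
        ∑ m ∈ G.parents a, e m a * ∑ c ∈ G.children b, e b c * G.pathWeight e m c := by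
    rw [sum_congr rfl fun c hc => by rw [ih c hc]]
    simp_rw [mul_add, sum_add_distrib, mul_ite, mul_one, mul_zero, sum_ite_eq', mem_children,
      mul_sum]
    rw [sum_comm]
    simp_rw [mul_left_comm]
  have hlast : ∑ m ∈ G.parents a, e m a * G.pathWeight e m b =
      (if G.edge b a then e b a else 0) +
        ∑ m ∈ G.parents a, e m a * ∑ c ∈ G.children b, e b c * G.pathWeight e m c := by
    simp_rw [pathWeight_eq e _ b, mul_add, sum_add_distrib, mul_ite, mul_one, mul_zero,
      sum_ite_eq, mem_parents]
  rw [pathWeight_eq, hfirst, hlast]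
  termination_by (b : ℕ)
  decreasing_by exact lt_of_mem_children hc

end PathWeight

section Circuit

variable {w : Fin d → Fin C → ℝ} {scope : Fin G.n → Finset (Fin d)} {fw bk : Fin G.n → ℝ}

variable (G) in
noncomputable def edgeDeriv (fw : Fin G.n → ℝ) (m c : Fin G.n) : ℝ :=
  match G.kind m with
  | .sum => G.θ m c
  | .prod => fw m / fw c
  | .input _ _ => 0

theorem edgeDeriv_of_isInput {m : Fin G.n} (hm : G.IsInput m) (c : Fin G.n) :
    G.edgeDeriv fw m c = 0 := by
  obtain ⟨i, f, h⟩ := hm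
  simp [edgeDeriv, h]

theorem ScopeFun.subset_of_mem_children (hscope : G.ScopeFun scope) {v c : Fin G.n}
    (hv : ¬ G.IsInput v) (hc : c ∈ G.children v) : scope c ⊆ scope v := by
  have hv' := hscope v
  rcases h : G.kind v with ⟨i, f⟩ | _ | _
  · exact absurd ⟨i, f, h⟩ hv
  all_goals simp only [h] at hv'; rw [hv']; exact subset_biUnion_of_mem scope hc

theorem ScopeFun.subset_of_pathWeight_ne_zero (hscope : G.ScopeFun scope)
    {e : Fin G.n → Fin G.n → ℝ} (he : ∀ v, G.IsInput v → ∀ c, e v c = 0) {a b : Fin G.n}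
    (hb : G.pathWeight e a b ≠ 0) : scope a ⊆ scope b := by
  by_cases hba : b = a
  · rw [hba]
  rw [pathWeight_eq, if_neg hba, zero_add] at hb
  obtain ⟨c, hc, hec⟩ := exists_ne_zero_of_sum_ne_zero hb
  have hbin : ¬ G.IsInput b := fun hin => hec (by rw [he b hin, zero_mul])
  exact (hscope.subset_of_pathWeight_ne_zero he (right_ne_zero_of_mul hec)).trans
    (hscope.subset_of_mem_children hbin hc)
  termination_by (b : ℕ)
  decreasing_by exact lt_of_mem_children hc

theorem Decomposable.eq_of_pathWeight_ne_zero (hdec : G.Decomposable scope)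
    (hscope : G.ScopeFun scope) {e : Fin G.n → Fin G.n → ℝ}
    (he : ∀ v, G.IsInput v → ∀ c, e v c = 0) {a : Fin G.n} (ha : (scope a).Nonempty)
    {v : Fin G.n} (hv : G.IsProd v) {c₁ c₂ : Fin G.n} (hc₁ : c₁ ∈ G.children v)
    (hc₂ : c₂ ∈ G.children v) (h₁ : G.pathWeight e a c₁ ≠ 0) (h₂ : G.pathWeight e a c₂ ≠ 0) :
    c₁ = c₂ := by
  by_contra hne
  obtain ⟨i, hi⟩ := ha
  exact disjoint_left.mp (hdec v hv c₁ hc₁ c₂ hc₂ hne)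
    (hscope.subset_of_pathWeight_ne_zero he h₁ hi)
    (hscope.subset_of_pathWeight_ne_zero he h₂ hi)

theorem FwReplaceFun.eq_add_pathWeight_mul (hscope : G.ScopeFun scope)
    (hdec : G.Decomposable scope) {n₀ : Fin G.n} (hn₀ : (scope n₀).Nonempty)
    (hfw : G.FwFun w fw) (hfw0 : ∀ v, fw v ≠ 0) {t : ℝ} {fw' : Fin G.n → ℝ}
    (hfw' : G.FwReplaceFun w n₀ t fw') (b : Fin G.n) :
    fw' b = fw b + G.pathWeight (G.edgeDeriv fw) n₀ b * (t - fw n₀) := by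
  by_cases hb : b = n₀
  · subst hb
    rw [hfw' b, if_pos rfl, pathWeight_self]
    ring
  have ih : ∀ c ∈ G.children b,
      fw' c = fw c + G.pathWeight (G.edgeDeriv fw) n₀ c * (t - fw n₀) :=
    fun c hc => hfw'.eq_add_pathWeight_mul hscope hdec hn₀ hfw hfw0 c
  have hfwb := hfw b
  rw [pathWeight_eq, if_neg hb, zero_add, sum_mul, hfw' b, if_neg hb]
  rcases h : G.kind b with ⟨i, f⟩ | _ | _
  · simp [hfwb, h, edgeDeriv]
  · simp only [h] at hfwb ⊢
    rw [sum_congr rfl fun c hc => by rw [ih c hc]]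
    simp only [edgeDeriv, h, hfwb, mul_add, sum_add_distrib, mul_assoc]
  · simp only [h] at hfwb ⊢
    have hunique : ∀ c₁ ∈ G.children b, ∀ c₂ ∈ G.children b,
        G.pathWeight (G.edgeDeriv fw) n₀ c₁ * (t - fw n₀) ≠ 0 →
        G.pathWeight (G.edgeDeriv fw) n₀ c₂ * (t - fw n₀) ≠ 0 → c₁ = c₂ :=
      fun c₁ hc₁ c₂ hc₂ h₁ h₂ =>
        hdec.eq_of_pathWeight_ne_zero hscope (fun _ hv => edgeDeriv_of_isInput hv) hn₀ h hc₁ hc₂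
          (left_ne_zero_of_mul h₁) (left_ne_zero_of_mul h₂)
    rw [prod_congr rfl ih, prod_add_eq_add_sum_of_ne_zero_unique _ _ _ hunique, ← hfwb]
    refine congrArg (fw b + ·) (sum_congr rfl fun c hc => ?_)
    have hsiblings : ∏ c' ∈ (G.children b).erase c, fw c' = fw b / fw c :=
      eq_div_of_mul_eq (hfw0 c) (by rw [prod_erase_mul _ _ hc, hfwb])
    simp only [edgeDeriv, h, hsiblings]
    ring
  termination_by (b : ℕ)
  decreasing_by exact lt_of_mem_children hc

theorem Alternating.isSum_of_edge_of_isProd (halt : G.Alternating) {p c : Fin G.n}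
    (hpc : G.edge p c) (hc : G.IsProd c) : G.IsSum p := by
  obtain ⟨hsum, hprod, hinput⟩ := halt p c hpc
  rcases h : G.kind p with ⟨i, f⟩ | _ | _
  · exact absurd ⟨i, f, h⟩ hinput
  · exact h
  · rcases hprod h with hs | ⟨i, f, hi⟩ <;> simp_all [IsSum, IsProd]

theorem Alternating.isProd_of_edge_of_not_isProd (halt : G.Alternating) {p c : Fin G.n}
    (hpc : G.edge p c) (hc : ¬ G.IsProd c) : G.IsProd p := by
  obtain ⟨hsum, -, hinput⟩ := halt p c hpc
  rcases h : G.kind p with ⟨i, f⟩ | _ | _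
  · exact absurd ⟨i, f, h⟩ hinput
  · exact absurd (hsum h) hc
  · exact h

theorem BkFun.eq_sum_parents (hbk : G.BkFun fw bk) (halt : G.Alternating)
    (hfw0 : ∀ v, fw v ≠ 0) {v : Fin G.n} (hv : v ≠ G.root) :
    bk v = ∑ m ∈ G.parents v, G.edgeDeriv fw m v * fw v / fw m * bk m := by
  rw [hbk v, if_neg hv]
  split
  case h_1 hprod =>
    refine sum_congr rfl fun m hm => ?_
    have hm : G.kind m = .sum := halt.isSum_of_edge_of_isProd (mem_parents.mp hm) hprod
    simp only [edgeDeriv, hm]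
  case h_2 hnprod =>
    refine sum_congr rfl fun m hm => ?_
    have hm : G.kind m = .prod := halt.isProd_of_edge_of_not_isProd (mem_parents.mp hm) hnprod
    simp only [edgeDeriv, hm]
    field_simp [hfw0 m, hfw0 v]

theorem BkFun.pathWeight_root (hbk : G.BkFun fw bk) (halt : G.Alternating)
    (hfw0 : ∀ v, fw v ≠ 0) (a : Fin G.n) :
    G.pathWeight (G.edgeDeriv fw) a G.root = bk a * fw G.root / fw a := by
  by_cases ha : a = G.root
  · rw [ha, pathWeight_self, hbk G.root, if_pos rfl, one_mul, div_self (hfw0 _)]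
  rw [pathWeight_eq_add_sum_parents, if_neg (Ne.symm ha), zero_add,
    hbk.eq_sum_parents halt hfw0 ha, sum_mul, sum_div]
  refine sum_congr rfl fun m hm => ?_
  rw [hbk.pathWeight_root halt hfw0 m]
  field_simp [hfw0 m, hfw0 a]
  termination_by G.n - a
  decreasing_by
    have := G.topo m a (mem_parents.mp hm)
    omega

end Circuit

end PCDag

theorem backward_value_perturbation_general {d C : ℕ} (G : PCDag d C)
    (w : Fin d → Fin C → ℝ)
    (scope : Fin G.n → Finset (Fin d)) (hscope : G.ScopeFun scope)
    (fw : Fin G.n → ℝ) (hfw : G.FwFun w fw)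
    (bk : Fin G.n → ℝ) (hbk : G.BkFun fw bk)
    (hdec : G.Decomposable scope)
    (halt : G.Alternating)
    (hpos : ∀ v, 0 < fw v)
    (hscopene : ∀ v, (scope v).Nonempty)
    (n₀ : Fin G.n) (t : ℝ)
    (fw' : Fin G.n → ℝ) (hfw' : G.FwReplaceFun w n₀ t fw') :
    fw' G.root = (1 - bk n₀) * fw G.root + bk n₀ * fw G.root * (t / fw n₀) := by
  have hfw0 : ∀ v, fw v ≠ 0 := fun v => (hpos v).ne'
  rw [hfw'.eq_add_pathWeight_mul hscope hdec (hscopene n₀) hfw hfw0,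
    hbk.pathWeight_root halt hfw0]
  field_simp [hfw0 n₀]
  ring

/-- **Perturbation semantics of the backward value**: in a smooth, decomposable PC with
strictly positive forward values, replacing the forward value of a node `n₀` by `t` changes
the root's recomputed value to `(1 − bk n₀)·fw root + bk n₀·fw root·t / fw n₀`, i.e. the
root value is an affine function of `t` with slope `bk n₀ · fw root / fw n₀`. -/
theorem backward_value_perturbation {d C : ℕ} (G : PCDag d C)
    (w : Fin d → Fin C → ℝ)
    (scope : Fin G.n → Finset (Fin d)) (hscope : G.ScopeFun scope)
    (fw : Fin G.n → ℝ) (hfw : G.FwFun w fw)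
    (bk : Fin G.n → ℝ) (hbk : G.BkFun fw bk)
    (hsm : G.Smooth scope) (hdec : G.Decomposable scope)
    (halt : G.Alternating) (hθ : G.ValidSumWeights)
    (hpos : ∀ v, 0 < fw v)
    (hne : G.InternalNonempty)
    (hscopene : ∀ v, (scope v).Nonempty)
    (hrootTop : ∀ p, ¬ G.edge p G.root)
    (n₀ : Fin G.n) (t : ℝ)
    (fw' : Fin G.n → ℝ) (hfw' : G.FwReplaceFun w n₀ t fw') :
    fw' G.root = (1 - bk n₀) * fw G.root + bk n₀ * fw G.root * (t / fw n₀) :=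
  backward_value_perturbation_general G w scope hscope fw hfw bk hbk hdec halt hpos hscopene n₀ t
    fw' hfw'
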